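/- If for all rounds t ≤ T the instantaneous regret satisfies r_t ≤ 2β_T σ_t + c_t with σ_t ∈ [0,1], c_t ≥ 0, and ∑_{t=1}^T 2 log(1 + σ_t²) ≤ 4γ_T, then the cumulative regret satisfies ∑_{t=1}^T r_t⁺ ≤ 4 β_T sqrt(T γ_T) + ∑_{t=1}^T c_t, assuming each bound 2β_Tσ_t + c_t is nonnegative. -/

import Mathlib

open Finset Real

-- `log (1 + x) ≥ x / (1 + x) ≥ x / 2` on `[0, 1]`.
lemma le_two_mul_log_one_add {x : ℝ} (h0 : 0 ≤ x) (h1 : x ≤ 1) : x ≤ 2 * log (1 + x) := by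
  have hpos : 0 < 1 + x := by linarith
  have half_le : x / 2 ≤ 1 - (1 + x)⁻¹ := by
    field_simp
    nlinarith
  linarith [one_sub_inv_le_log_of_pos hpos]

section

variable {ι : Type*} (s : Finset ι) {σ : ι → ℝ}

lemma sum_le_sqrt_card_mul_sum_sq (f : ι → ℝ) : ∑ i ∈ s, f i ≤ √(#s * ∑ i ∈ s, f i ^ 2) :=
  le_sqrt_of_sq_le sq_sum_le_card_mul_sum_sq

lemma sum_sq_le_sum_two_mul_log_one_add_sq (hσ : ∀ i ∈ s, |σ i| ≤ 1) :
    ∑ i ∈ s, σ i ^ 2 ≤ ∑ i ∈ s, 2 * log (1 + σ i ^ 2) :=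
  sum_le_sum fun i hi ↦
    le_two_mul_log_one_add (sq_nonneg _) ((sq_le_one_iff_abs_le_one _).mpr (hσ i hi))

lemma sum_le_two_mul_sqrt_of_sum_two_mul_log_one_add_sq_le {γ : ℝ} (hσ : ∀ i ∈ s, |σ i| ≤ 1)
    (hlog : ∑ i ∈ s, 2 * log (1 + σ i ^ 2) ≤ 4 * γ) :
    ∑ i ∈ s, σ i ≤ 2 * √(#s * γ) :=
  calc ∑ i ∈ s, σ i ≤ √(#s * ∑ i ∈ s, σ i ^ 2) := sum_le_sqrt_card_mul_sum_sq s σ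
    _ ≤ √(#s * (4 * γ)) := by
      gcongr
      exact (sum_sq_le_sum_two_mul_log_one_add_sq s hσ).trans hlog
    _ = 2 * √(#s * γ) := by
      rw [show (#s : ℝ) * (4 * γ) = 2 ^ 2 * (#s * γ) by ring, sqrt_mul (by positivity),
        sqrt_sq zero_le_two]

end

theorem cumulative_regret_bound_general (T : ℕ)
    (β γ : ℝ) (hβ : 0 ≤ β)
    (r σ c : Fin T → ℝ)
    (hσ0 : ∀ t, 0 ≤ σ t) (hσ1 : ∀ t, σ t ≤ 1) (hc : ∀ t, 0 ≤ c t)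
    (hr : ∀ t, r t ≤ 2 * β * σ t + c t)
    (hlog : ∑ t, 2 * Real.log (1 + (σ t) ^ 2) ≤ 4 * γ) :
    ∑ t, max 0 (r t) ≤ 4 * β * Real.sqrt ((T : ℝ) * γ) + ∑ t, c t := by
  have hσ : ∀ t ∈ univ, |σ t| ≤ 1 := fun t _ ↦ abs_le.mpr ⟨by linarith [hσ0 t], hσ1 t⟩
  have hsum := sum_le_two_mul_sqrt_of_sum_two_mul_log_one_add_sq_le univ hσ hlog
  rw [card_univ, Fintype.card_fin] at hsum
  calc ∑ t, max 0 (r t) ≤ ∑ t, (2 * β * σ t + c t) :=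
        sum_le_sum fun t _ ↦ max_le (by have := hσ0 t; have := hc t; positivity) (hr t)
    _ = 2 * β * ∑ t, σ t + ∑ t, c t := by rw [sum_add_distrib, mul_sum]
    _ ≤ 2 * β * (2 * √(T * γ)) + ∑ t, c t := by gcongr
    _ = 4 * β * √(T * γ) + ∑ t, c t := by ring

/-- Cumulative regret bound from instantaneous bounds: if `r_t ≤ 2β_T σ_t + c_t` with
`σ_t ∈ [0,1]`, `c_t ≥ 0`, and `∑ 2 log(1 + σ_t²) ≤ 4 γ_T`, then
`∑ r_t⁺ ≤ 4 β_T √(T γ_T) + ∑ c_t`. -/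
theorem cumulative_regret_bound (T : ℕ) (hT : 0 < T)
    (β γ : ℝ) (hβ : 0 ≤ β) (hγ : 0 ≤ γ)
    (r σ c : Fin T → ℝ)
    (hσ0 : ∀ t, 0 ≤ σ t) (hσ1 : ∀ t, σ t ≤ 1) (hc : ∀ t, 0 ≤ c t)
    (hr : ∀ t, r t ≤ 2 * β * σ t + c t)
    (hlog : ∑ t, 2 * Real.log (1 + (σ t) ^ 2) ≤ 4 * γ) :
    ∑ t, max 0 (r t) ≤ 4 * β * Real.sqrt ((T : ℝ) * γ) + ∑ t, c t :=
  cumulative_regret_bound_general T β γ hβ r σ c hσ0 hσ1 hc hr hlog
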